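/- arXiv:1804.09407 — 2 statements merged into one kernel-verified Lean document; each statement's English description precedes it below -/
import Mathlib

section
/- Let G = G1 ⊕ G2 be the join of two vertex-disjoint graphs G1 and G2, and let F1 and F2 be maximum matchings of G1 and G2 respectively. Then G has a maximum matching F such that every edge of F with both endpoints in V(G1) belongs to F1 and every edge of F with both endpoints in V(G2) belongs to F2 (all other edges of F have one endpoint in V(G1) and one endpoint in V(G2)). -/
open SimpleGraph

/-- A matching: a set of edges of `G` with pairwise disjoint endpoints. -/
def IsMatching {V : Type*} (G : SimpleGraph V) (F : Set (Sym2 V)) : Prop :=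
  F ⊆ G.edgeSet ∧ ∀ e ∈ F, ∀ f ∈ F, ∀ v : V, v ∈ e → v ∈ f → e = f

/-- A maximum matching: a matching of maximum cardinality. -/
def IsMaximumMatching {V : Type*} (G : SimpleGraph V) (F : Set (Sym2 V)) : Prop :=
  IsMatching G F ∧ ∀ F' : Set (Sym2 V), IsMatching G F' → F'.ncard ≤ F.ncard

/-!
Take a maximum matching `M` of the join and split it into the edges inside `S₁`, those inside `S₂`,
and the cross edges `C`. The inner parts are matchings of `G₁` and `G₂`, hence no larger than
`F₁` and `F₂`, so they can be traded for equally large subsets `A ⊆ F₁` and `B ⊆ F₂`. A matching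
covers exactly twice its size, so `A` leaves as many vertices of `S₁` uncovered as the inner part
of `M` did, and each edge of `C` uses one of those; likewise in `S₂`. Every cross pair is an edge
of the join, so `|C|` free vertices of `S₁` can be matched to free vertices of `S₂`. Together
with `A` and `B` this is a matching of size `|M|` of the required shape.
-/

section

variable {V : Type*} {G H : SimpleGraph V} {M N C : Set (Sym2 V)} {S : Set V}

def coveredVerts (M : Set (Sym2 V)) : Set V := {v | ∃ e ∈ M, v ∈ e}

lemma coveredVerts_union : coveredVerts (M ∪ N) = coveredVerts M ∪ coveredVerts N := by
  ext v
  simp only [coveredVerts, Set.mem_union, Set.mem_ofPred_eq, or_and_right, exists_or]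

lemma coveredVerts_subset (hS : ∀ u v, G.Adj u v → u ∈ S ∧ v ∈ S) (hM : M ⊆ G.edgeSet) :
    coveredVerts M ⊆ S := by
  rintro v ⟨e, he, hv⟩
  induction e using Sym2.ind with
  | h x y =>
    rcases Sym2.mem_iff.mp hv with rfl | rfl
    exacts [(hS _ _ (hM he)).1, (hS _ _ (hM he)).2]

lemma disjoint_of_disjoint_coveredVerts (h : Disjoint (coveredVerts M) (coveredVerts N)) :
    Disjoint M N :=
  Set.disjoint_left.mpr fun e hM hN =>
    Set.disjoint_left.mp h ⟨e, hM, e.out_fst_mem⟩ ⟨e, hN, e.out_fst_mem⟩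

lemma IsMatching.of_subset (hM : IsMatching G M) (hNM : N ⊆ M) (hN : N ⊆ H.edgeSet) :
    IsMatching H N :=
  ⟨hN, fun e he f hf => hM.2 e (hNM he) f (hNM hf)⟩

lemma IsMatching.union (hM : IsMatching G M) (hN : IsMatching G N)
    (h : Disjoint (coveredVerts M) (coveredVerts N)) : IsMatching G (M ∪ N) := by
  refine ⟨Set.union_subset hM.1 hN.1, ?_⟩
  have hMN : ∀ e ∈ M, ∀ f ∈ N, ∀ v, v ∈ e → v ∈ f → False := fun e he f hf v hve hvf =>
    Set.disjoint_left.mp h ⟨e, he, hve⟩ ⟨f, hf, hvf⟩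
  rintro e (he | he) f (hf | hf) v hve hvf
  exacts [hM.2 e he f hf v hve hvf, (hMN e he f hf v hve hvf).elim,
    (hMN f hf e he v hvf hve).elim, hN.2 e he f hf v hve hvf]

lemma IsMatching.ncard_coveredVerts [Finite V] (hM : IsMatching G M) :
    (coveredVerts M).ncard = 2 * M.ncard := by
  have hU : coveredVerts M = ⋃ e ∈ M, {v | v ∈ e} := by
    ext v; simp [coveredVerts]
  have hpair : ∀ e ∈ M, {v | v ∈ e}.ncard = 2 := by
    intro e he
    induction e using Sym2.ind with
    | h x y =>
      have hxy : x ≠ y := G.ne_of_adj (hM.1 he)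
      rw [show {v | v ∈ s(x, y)} = {x, y} by ext; simp [Sym2.mem_iff]]
      exact Set.ncard_pair hxy
  have hdisj : M.PairwiseDisjoint fun e => {v | v ∈ e} := fun e he f hf hef =>
    Set.disjoint_left.mpr fun v hve hvf => hef (hM.2 e he f hf v hve hvf)
  rw [hU, (Set.toFinite M).ncard_biUnion (fun _ _ => Set.toFinite _) hdisj,
    finsum_mem_congr rfl hpair, ← finsum_one, mul_finsum_mem, mul_one]

lemma IsMatching.ncard_sdiff_coveredVerts_add [Finite V] (hM : IsMatching G M)
    (hS : coveredVerts M ⊆ S) : (S \ coveredVerts M).ncard + 2 * M.ncard = S.ncard := by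
  rw [← hM.ncard_coveredVerts, Set.ncard_sdiff_add_ncard_of_subset hS]

lemma IsMatching.ncard_le_of_forall_exists_mem (hM : IsMatching G M)
    (hS : ∀ e ∈ M, ∃ v ∈ S, v ∈ e) (hSfin : S.Finite) : M.ncard ≤ S.ncard := by
  rcases isEmpty_or_nonempty V with hV | hV
  · simp [Set.eq_empty_of_isEmpty M]
  choose! g hgS hge using hS
  exact Set.ncard_le_ncard_of_injOn g hgS
    (fun e he f hf hef => hM.2 e he f hf (g e) (hge e he) (hef ▸ hge f hf)) hSfin

lemma IsMatching.ncard_add_two_mul_ncard_le [Finite V] (hM : IsMatching G M) (hCM : C ⊆ M)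
    (hNM : N ⊆ M) (hCN : Disjoint C N) (hS : ∀ e ∈ C, ∃ v ∈ S, v ∈ e)
    (hNS : coveredVerts N ⊆ S) : C.ncard + 2 * N.ncard ≤ S.ncard := by
  have hC : C.ncard ≤ (S \ coveredVerts N).ncard := by
    refine (hM.of_subset hCM (hCM.trans hM.1)).ncard_le_of_forall_exists_mem (fun e he => ?_)
      (Set.toFinite _)
    obtain ⟨v, hvS, hve⟩ := hS e he
    refine ⟨v, ⟨hvS, ?_⟩, hve⟩
    rintro ⟨f, hf, hvf⟩
    exact Set.disjoint_left.mp hCN he (hM.2 e (hCM he) f (hNM hf) v hve hvf ▸ hf)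
  have hN := (hM.of_subset hNM (hNM.trans hM.1)).ncard_sdiff_coveredVerts_add hNS
  omega

lemma exists_isMatching_ncard_eq_of_forall_adj [Finite V] {T₁ T₂ : Set V} (hT : Disjoint T₁ T₂)
    (hadj : ∀ a ∈ T₁, ∀ b ∈ T₂, G.Adj a b) {n : ℕ} (h₁ : n ≤ T₁.ncard) (h₂ : n ≤ T₂.ncard) :
    ∃ X, IsMatching G X ∧ X.ncard = n ∧ ∀ e ∈ X, ∃ a ∈ T₁, ∃ b ∈ T₂, e = s(a, b) := by
  rcases isEmpty_or_nonempty V with hV | hV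
  · refine ⟨∅, ⟨Set.empty_subset _, by simp⟩, ?_, by simp⟩
    simpa [Set.eq_empty_of_isEmpty T₁, eq_comm] using h₁
  obtain ⟨U, hUT₁, rfl⟩ := Set.exists_subset_card_eq h₁
  obtain ⟨f, hfT₂, hf⟩ := (Set.toFinite U).exists_injOn_of_encard_le (t := T₂) (by
    rw [← (Set.toFinite U).cast_ncard_eq, ← (Set.toFinite T₂).cast_ncard_eq]
    exact_mod_cast h₂)
  have hUT₂ : ∀ a ∈ U, a ∉ T₂ := fun a ha => Set.disjoint_left.mp hT (hUT₁ ha)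
  refine ⟨(fun a => s(a, f a)) '' U, ⟨?_, ?_⟩, ?_, ?_⟩
  · rintro _ ⟨a, ha, rfl⟩
    exact hadj a (hUT₁ ha) (f a) (hfT₂ ha)
  · rintro _ ⟨a, ha, rfl⟩ _ ⟨b, hb, rfl⟩ v hva hvb
    suffices a = b by rw [this]
    rcases Sym2.mem_iff.mp hva with rfl | rfl <;> rcases Sym2.mem_iff.mp hvb with h | h
    · exact h
    · exact absurd (h ▸ hfT₂ hb) (hUT₂ _ ha)
    · exact absurd (h ▸ hfT₂ ha) (hUT₂ _ hb)
    · exact hf ha hb h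
  · refine Set.InjOn.ncard_image fun a ha b hb hab => ?_
    rcases Sym2.eq_iff.mp hab with ⟨h, -⟩ | ⟨h, -⟩
    · exact h
    · exact absurd (h ▸ hfT₂ hb) (hUT₂ a ha)
  · rintro _ ⟨a, ha, rfl⟩
    exact ⟨a, hUT₁ ha, f a, hfT₂ ha, rfl⟩

lemma exists_isMaximumMatching [Finite V] (G : SimpleGraph V) : ∃ M, IsMaximumMatching G M := by
  have : Nonempty {M : Set (Sym2 V) // IsMatching G M} := ⟨⟨∅, Set.empty_subset _, by simp⟩⟩
  obtain ⟨⟨M, hM⟩, hmax⟩ :=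
    Finite.exists_max fun M : {M : Set (Sym2 V) // IsMatching G M} => M.1.ncard
  exact ⟨M, hM, fun M' hM' => hmax ⟨M', hM'⟩⟩

section Join

variable {G₁ G₂ : SimpleGraph V} {S₁ S₂ : Set V}

lemma exists_eq_mk_of_join
    (hG : ∀ u v, G.Adj u v ↔ G₁.Adj u v ∨ G₂.Adj u v ∨ (u ∈ S₁ ∧ v ∈ S₂) ∨ (u ∈ S₂ ∧ v ∈ S₁))
    {e : Sym2 V} (he : e ∈ G.edgeSet) (h₁ : e ∉ G₁.edgeSet) (h₂ : e ∉ G₂.edgeSet) :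
    ∃ a ∈ S₁, ∃ b ∈ S₂, e = s(a, b) := by
  induction e using Sym2.ind with
  | h x y =>
    rcases (hG x y).1 he with h | h | h | h
    · exact absurd h h₁
    · exact absurd h h₂
    · exact ⟨x, h.1, y, h.2, rfl⟩
    · exact ⟨y, h.2, x, h.1, Sym2.eq_swap⟩

lemma exists_isMatching_of_ncard_add_two_mul_le [Finite V] (hdisj : Disjoint S₁ S₂)
    (hadj : ∀ a ∈ S₁, ∀ b ∈ S₂, G.Adj a b) {A B : Set (Sym2 V)} (hA : IsMatching G A)
    (hB : IsMatching G B) (hAS : coveredVerts A ⊆ S₁) (hBS : coveredVerts B ⊆ S₂) {c : ℕ}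
    (h₁ : c + 2 * A.ncard ≤ S₁.ncard) (h₂ : c + 2 * B.ncard ≤ S₂.ncard) :
    ∃ X, IsMatching G (A ∪ B ∪ X) ∧ (A ∪ B ∪ X).ncard = A.ncard + B.ncard + c ∧
      ∀ e ∈ X, ∃ a ∈ S₁, ∃ b ∈ S₂, e = s(a, b) := by
  have hT₁ := hA.ncard_sdiff_coveredVerts_add hAS
  have hT₂ := hB.ncard_sdiff_coveredVerts_add hBS
  obtain ⟨X, hX, hXcard, hXcross⟩ := exists_isMatching_ncard_eq_of_forall_adj
    (T₁ := S₁ \ coveredVerts A) (T₂ := S₂ \ coveredVerts B)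
    (hdisj.mono Set.sdiff_subset Set.sdiff_subset) (fun a ha b hb => hadj a ha.1 b hb.1)
    (n := c) (by omega) (by omega)
  have hVX : coveredVerts X ⊆ (S₁ \ coveredVerts A) ∪ (S₂ \ coveredVerts B) := by
    rintro v ⟨e, he, hv⟩
    obtain ⟨a, ha, b, hb, rfl⟩ := hXcross e he
    rcases Sym2.mem_iff.mp hv with rfl | rfl
    exacts [Or.inl ha, Or.inr hb]
  have hAB : Disjoint (coveredVerts A) (coveredVerts B) := hdisj.mono hAS hBS
  have hABX : Disjoint (coveredVerts (A ∪ B)) (coveredVerts X) := by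
    rw [coveredVerts_union]
    refine Disjoint.mono_right hVX ?_
    tauto_set
  refine ⟨X, (hA.union hB hAB).union hX hABX, ?_, fun e he => ?_⟩
  · rw [Set.ncard_union_eq (disjoint_of_disjoint_coveredVerts hABX),
      Set.ncard_union_eq (disjoint_of_disjoint_coveredVerts hAB), hXcard]
  · obtain ⟨a, ha, b, hb, rfl⟩ := hXcross e he
    exact ⟨a, ha.1, b, hb.1, rfl⟩

lemma exists_isMatching_ncard_eq_of_join [Finite V] (hdisj : Disjoint S₁ S₂)
    (hG₁ : ∀ u v, G₁.Adj u v → u ∈ S₁ ∧ v ∈ S₁) (hG₂ : ∀ u v, G₂.Adj u v → u ∈ S₂ ∧ v ∈ S₂)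
    (hG : ∀ u v, G.Adj u v ↔ G₁.Adj u v ∨ G₂.Adj u v ∨ (u ∈ S₁ ∧ v ∈ S₂) ∨ (u ∈ S₂ ∧ v ∈ S₁))
    {F₁ F₂ : Set (Sym2 V)} (hF₁ : IsMaximumMatching G₁ F₁) (hF₂ : IsMaximumMatching G₂ F₂)
    (hM : IsMatching G M) :
    ∃ F, IsMatching G F ∧ F.ncard = M.ncard ∧
      ∀ e ∈ F, e ∈ F₁ ∨ e ∈ F₂ ∨ ∃ a ∈ S₁, ∃ b ∈ S₂, e = s(a, b) := by
  have hG₁G : G₁.edgeSet ⊆ G.edgeSet := edgeSet_mono fun u v h => (hG u v).2 (Or.inl h)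
  have hG₂G : G₂.edgeSet ⊆ G.edgeSet := edgeSet_mono fun u v h => (hG u v).2 (Or.inr (Or.inl h))
  have hE : Disjoint G₁.edgeSet G₂.edgeSet := disjoint_of_disjoint_coveredVerts <|
    hdisj.mono (coveredVerts_subset hG₁ subset_rfl) (coveredVerts_subset hG₂ subset_rfl)
  set M₁ := M ∩ G₁.edgeSet
  set M₂ := M ∩ G₂.edgeSet
  set C := M \ (G₁.edgeSet ∪ G₂.edgeSet)
  have hM₁ : IsMatching G₁ M₁ := hM.of_subset Set.inter_subset_left Set.inter_subset_right
  have hM₂ : IsMatching G₂ M₂ := hM.of_subset Set.inter_subset_left Set.inter_subset_right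
  have hC : ∀ e ∈ C, ∃ a ∈ S₁, ∃ b ∈ S₂, e = s(a, b) := fun e he =>
    exists_eq_mk_of_join hG (hM.1 he.1) (fun h => he.2 (Or.inl h)) (fun h => he.2 (Or.inr h))
  have hMcard : M.ncard = M₁.ncard + M₂.ncard + C.ncard := by
    rw [← Set.ncard_union_eq (hE.mono Set.inter_subset_right Set.inter_subset_right),
      ← Set.inter_union_distrib_left, Set.ncard_inter_add_ncard_sdiff_eq_ncard]
  have hC₁ : C.ncard + 2 * M₁.ncard ≤ S₁.ncard :=
    hM.ncard_add_two_mul_ncard_le Set.sdiff_subset Set.inter_subset_left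
      (Set.disjoint_left.mpr fun e hC h₁ => hC.2 (Or.inl h₁.2))
      (fun e he => by obtain ⟨a, ha, b, -, rfl⟩ := hC e he; exact ⟨a, ha, Sym2.mem_mk_left a b⟩)
      (coveredVerts_subset hG₁ hM₁.1)
  have hC₂ : C.ncard + 2 * M₂.ncard ≤ S₂.ncard :=
    hM.ncard_add_two_mul_ncard_le Set.sdiff_subset Set.inter_subset_left
      (Set.disjoint_left.mpr fun e hC h₂ => hC.2 (Or.inr h₂.2))
      (fun e he => by obtain ⟨a, -, b, hb, rfl⟩ := hC e he; exact ⟨b, hb, Sym2.mem_mk_right a b⟩)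
      (coveredVerts_subset hG₂ hM₂.1)
  obtain ⟨A, hAF₁, hA⟩ := Set.exists_subset_card_eq (hF₁.2 M₁ hM₁)
  obtain ⟨B, hBF₂, hB⟩ := Set.exists_subset_card_eq (hF₂.2 M₂ hM₂)
  obtain ⟨X, hF, hFcard, hX⟩ := exists_isMatching_of_ncard_add_two_mul_le hdisj
    (fun a ha b hb => (hG a b).2 (Or.inr (Or.inr (Or.inl ⟨ha, hb⟩))))
    (hF₁.1.of_subset hAF₁ ((hAF₁.trans hF₁.1.1).trans hG₁G))
    (hF₂.1.of_subset hBF₂ ((hBF₂.trans hF₂.1.1).trans hG₂G))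
    (coveredVerts_subset hG₁ (hAF₁.trans hF₁.1.1)) (coveredVerts_subset hG₂ (hBF₂.trans hF₂.1.1))
    (hA ▸ hC₁) (hB ▸ hC₂)
  refine ⟨A ∪ B ∪ X, hF, by rw [hFcard, hA, hB, hMcard], ?_⟩
  rintro e ((he | he) | he)
  exacts [Or.inl (hAF₁ he), Or.inr (Or.inl (hBF₂ he)), Or.inr (Or.inr (hX e he))]

end Join

end

theorem join_max_matching_general {V : Type*} [Fintype V] (G G1 G2 : SimpleGraph V) (S1 S2 : Set V)
    (hdisj : Disjoint S1 S2)
    (hG1 : ∀ u v : V, G1.Adj u v → u ∈ S1 ∧ v ∈ S1)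
    (hG2 : ∀ u v : V, G2.Adj u v → u ∈ S2 ∧ v ∈ S2)
    (hG : ∀ u v : V, G.Adj u v ↔
      (G1.Adj u v ∨ G2.Adj u v ∨ (u ∈ S1 ∧ v ∈ S2) ∨ (u ∈ S2 ∧ v ∈ S1)))
    (F1 F2 : Set (Sym2 V))
    (hF1 : IsMaximumMatching G1 F1) (hF2 : IsMaximumMatching G2 F2) :
    ∃ F : Set (Sym2 V), IsMaximumMatching G F ∧
      (∀ e ∈ F, (∀ v ∈ e, v ∈ S1) → e ∈ F1) ∧
      (∀ e ∈ F, (∀ v ∈ e, v ∈ S2) → e ∈ F2) ∧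
      (∀ e ∈ F, e ∈ F1 ∨ e ∈ F2 ∨ ∃ a ∈ S1, ∃ b ∈ S2, e = s(a, b)) := by
  obtain ⟨M, hM⟩ := exists_isMaximumMatching G
  obtain ⟨F, hF, hFM, hFshape⟩ :=
    exists_isMatching_ncard_eq_of_join hdisj hG1 hG2 hG hF1 hF2 hM.1
  have hVF1 : coveredVerts F1 ⊆ S1 := coveredVerts_subset hG1 hF1.1.1
  have hVF2 : coveredVerts F2 ⊆ S2 := coveredVerts_subset hG2 hF2.1.1
  refine ⟨F, ⟨hF, fun F' hF' => hFM ▸ hM.2 F' hF'⟩, fun e he hS => ?_, fun e he hS => ?_,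
    hFshape⟩
  · rcases hFshape e he with h | h | ⟨a, -, b, hb, rfl⟩
    · exact h
    · exact absurd (hVF2 ⟨e, h, e.out_fst_mem⟩) (hdisj.notMem_of_mem_left (hS _ e.out_fst_mem))
    · exact absurd hb (hdisj.notMem_of_mem_left (hS b (Sym2.mem_mk_right a b)))
  · rcases hFshape e he with h | h | ⟨a, ha, b, -, rfl⟩
    · exact absurd (hVF1 ⟨e, h, e.out_fst_mem⟩) (hdisj.notMem_of_mem_right (hS _ e.out_fst_mem))
    · exact h
    · exact absurd ha (hdisj.notMem_of_mem_right (hS a (Sym2.mem_mk_left a b)))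

/-- Let `G = G1 ⊕ G2` be the join of two vertex-disjoint graphs `G1` (on vertex set `S1`)
and `G2` (on vertex set `S2`), and let `F1`, `F2` be maximum matchings of `G1`, `G2`.
Then `G` has a maximum matching `F` such that every edge of `F` with both endpoints in
`S1` belongs to `F1`, every edge of `F` with both endpoints in `S2` belongs to `F2`,
and every other edge of `F` has one endpoint in `S1` and one endpoint in `S2`. -/
theorem join_max_matching {V : Type*} [Fintype V] (G G1 G2 : SimpleGraph V) (S1 S2 : Set V)
    (hdisj : Disjoint S1 S2) (hcover : S1 ∪ S2 = Set.univ)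
    (hG1 : ∀ u v : V, G1.Adj u v → u ∈ S1 ∧ v ∈ S1)
    (hG2 : ∀ u v : V, G2.Adj u v → u ∈ S2 ∧ v ∈ S2)
    (hG : ∀ u v : V, G.Adj u v ↔
      (G1.Adj u v ∨ G2.Adj u v ∨ (u ∈ S1 ∧ v ∈ S2) ∨ (u ∈ S2 ∧ v ∈ S1)))
    (F1 F2 : Set (Sym2 V))
    (hF1 : IsMaximumMatching G1 F1) (hF2 : IsMaximumMatching G2 F2) :
    ∃ F : Set (Sym2 V), IsMaximumMatching G F ∧
      (∀ e ∈ F, (∀ v ∈ e, v ∈ S1) → e ∈ F1) ∧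
      (∀ e ∈ F, (∀ v ∈ e, v ∈ S2) → e ∈ F2) ∧
      (∀ e ∈ F, e ∈ F1 ∨ e ∈ F2 ∨ ∃ a ∈ S1, ∃ b ∈ S2, e = s(a, b)) :=
  join_max_matching_general G G1 G2 S1 S2 hdisj hG1 hG2 hG F1 F2 hF1 hF2
end

section
/- Let M be a nonempty module of a graph G and let F be a matching of G. Let A ⊆ M be the set of vertices of M that are matched by F to vertices outside M, and let B ⊆ V ∖ M be the set of F-partners of the vertices of A. Then every vertex of A is adjacent to every vertex of B, and for every bijection σ : A → B, the edge set obtained from F by replacing the edges of F between A and B with { {a, σ(a)} : a ∈ A } is a matching of G of the same cardinality as F. -/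
open SimpleGraph

/-- A module of a graph: every vertex outside `M` is adjacent to all of `M` or to none of `M`. -/
def IsModule {V : Type*} (G : SimpleGraph V) (M : Set V) : Prop :=
  ∀ x ∈ M, ∀ y ∈ M, ∀ z, z ∉ M → (G.Adj x z ↔ G.Adj y z)

/-! Since `M` is a module and every `b ∈ B` is the `F`-partner of some vertex of `A ⊆ M`,
all of `A` is adjacent to all of `B`. Because `F` is a matching, the `F`-edges meeting `A ∪ B` are
exactly the `F`-edges between `A` and `B`, one at each vertex of `A`. Replacing them by the edges
`{a, σ a}` therefore keeps endpoints disjoint and trades one copy of `A` for another. -/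

section

variable {V : Type*} {G : SimpleGraph V} {F : Set (Sym2 V)} {A B : Set V}

def crossEdges (A B : Set V) : Set (Sym2 V) := {e | ∃ a ∈ A, ∃ b ∈ B, e = s(a, b)}

def pairingEdges (τ : A → V) : Set (Sym2 V) := {e | ∃ a : A, e = s((a : V), τ a)}

theorem mem_or_mem_of_mem_pairingEdges {τ : A → V} (hτ : ∀ a, τ a ∈ B) {e : Sym2 V} {v : V}
    (he : e ∈ pairingEdges τ) (hv : v ∈ e) : v ∈ A ∨ v ∈ B := by
  obtain ⟨a, rfl⟩ := he
  rcases Sym2.mem_iff.mp hv with rfl | rfl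
  exacts [Or.inl a.2, Or.inr (hτ a)]

theorem encard_pairingEdges {τ : A → V} (hτ : ∀ a, τ a ∉ A) :
    (pairingEdges τ).encard = A.encard := by
  have hinj : Function.Injective fun a : A => s((a : V), τ a) := by
    intro a a' h
    rcases Sym2.eq_iff.mp h with ⟨h, -⟩ | ⟨h, -⟩
    · exact Subtype.ext h
    · exact absurd (h ▸ a.2) (hτ a')
  have hrange : pairingEdges τ = Set.range fun a : A => s((a : V), τ a) := by
    ext e
    exact exists_congr fun _ => eq_comm
  rw [hrange, Set.encard_congr (Equiv.ofInjective _ hinj).symm]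

theorem isMatching_pairingEdges (hAB : Disjoint A B) (σ : A ≃ B) (hσ : ∀ a : A, G.Adj a (σ a)) :
    IsMatching G (pairingEdges fun a => (σ a : V)) := by
  refine ⟨?_, ?_⟩
  · rintro e ⟨a, rfl⟩
    exact hσ a
  · rintro e ⟨a, rfl⟩ f ⟨a', rfl⟩ v hve hvf
    rcases Sym2.mem_iff.mp hve with rfl | rfl <;> rcases Sym2.mem_iff.mp hvf with h | h
    · rw [Subtype.ext h]
    · exact absurd (h ▸ (σ a').2) (hAB.notMem_of_mem_left a.2)
    · exact absurd (h ▸ (σ a).2) (hAB.notMem_of_mem_left a'.2)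
    · rw [σ.injective (Subtype.ext h)]

namespace IsMatching

theorem mono {F' : Set (Sym2 V)} (hF : IsMatching G F) (h : F' ⊆ F) : IsMatching G F' :=
  ⟨h.trans hF.1, fun e he f hf => hF.2 e (h he) f (h hf)⟩

theorem union_s9 {F' : Set (Sym2 V)} (hF : IsMatching G F) (hF' : IsMatching G F')
    (hdisj : ∀ e ∈ F, ∀ f ∈ F', ∀ v ∈ e, v ∉ f) : IsMatching G (F ∪ F') := by
  refine ⟨Set.union_subset hF.1 hF'.1, ?_⟩
  rintro e (he | he) f (hf | hf) v hve hvf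
  · exact hF.2 e he f hf v hve hvf
  · exact absurd hvf (hdisj e he f hf v hve)
  · exact absurd hve (hdisj f hf e he v hvf)
  · exact hF'.2 e he f hf v hve hvf

theorem mem_crossEdges_of_mem_left (hF : IsMatching G F)
    (hAF : ∀ a ∈ A, ∃ b ∈ B, s(a, b) ∈ F) {e : Sym2 V} {a : V} (he : e ∈ F) (ha : a ∈ A)
    (hae : a ∈ e) : e ∈ crossEdges A B := by
  obtain ⟨b, hb, hab⟩ := hAF a ha
  exact ⟨a, ha, b, hb, hF.2 e he _ hab a hae (Sym2.mem_mk_left a b)⟩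

theorem mem_crossEdges_of_mem_right (hF : IsMatching G F)
    (hBF : ∀ b ∈ B, ∃ a ∈ A, s(a, b) ∈ F) {e : Sym2 V} {b : V} (he : e ∈ F) (hb : b ∈ B)
    (hbe : b ∈ e) : e ∈ crossEdges A B := by
  obtain ⟨a, ha, hab⟩ := hBF b hb
  exact ⟨a, ha, b, hb, hF.2 e he _ hab b hbe (Sym2.mem_mk_right a b)⟩

theorem notMem_of_mem_diff_crossEdges (hF : IsMatching G F)
    (hAF : ∀ a ∈ A, ∃ b ∈ B, s(a, b) ∈ F) (hBF : ∀ b ∈ B, ∃ a ∈ A, s(a, b) ∈ F)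
    {e : Sym2 V} {v : V} (he : e ∈ F \ crossEdges A B) (hv : v ∈ e) : v ∉ A ∧ v ∉ B :=
  ⟨fun hvA => he.2 (hF.mem_crossEdges_of_mem_left hAF he.1 hvA hv),
    fun hvB => he.2 (hF.mem_crossEdges_of_mem_right hBF he.1 hvB hv)⟩

theorem exchange (hF : IsMatching G F)
    (hAF : ∀ a ∈ A, ∃ b ∈ B, s(a, b) ∈ F) (hBF : ∀ b ∈ B, ∃ a ∈ A, s(a, b) ∈ F)
    (hAB : Disjoint A B) (σ : A ≃ B) (hσ : ∀ a : A, G.Adj a (σ a)) :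
    IsMatching G ((F \ crossEdges A B) ∪ pairingEdges fun a => (σ a : V)) := by
  refine (hF.mono Set.sdiff_subset).union_s9 (isMatching_pairingEdges hAB σ hσ) ?_
  intro e he f hf v hve hvf
  have hv := hF.notMem_of_mem_diff_crossEdges hAF hBF he hve
  rcases mem_or_mem_of_mem_pairingEdges (fun a => (σ a).2) hf hvf with h | h
  exacts [hv.1 h, hv.2 h]

theorem encard_inter_crossEdges (hF : IsMatching G F) (hAF : ∀ a ∈ A, ∃ b ∈ B, s(a, b) ∈ F)
    (hAB : Disjoint A B) : (F ∩ crossEdges A B).encard = A.encard := by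
  choose τ hτB hτF using fun a : A => hAF a a.2
  have hpartner : F ∩ crossEdges A B = pairingEdges τ := by
    ext e
    constructor
    · rintro ⟨he, a, ha, b, -, rfl⟩
      exact ⟨⟨a, ha⟩, hF.2 _ he _ (hτF ⟨a, ha⟩) a (Sym2.mem_mk_left _ _) (Sym2.mem_mk_left _ _)⟩
    · rintro ⟨a, rfl⟩
      exact ⟨hτF a, a, a.2, τ a, hτB a, rfl⟩
  rw [hpartner, encard_pairingEdges fun a => hAB.notMem_of_mem_right (hτB a)]

theorem ncard_exchange (hF : IsMatching G F)
    (hAF : ∀ a ∈ A, ∃ b ∈ B, s(a, b) ∈ F) (hBF : ∀ b ∈ B, ∃ a ∈ A, s(a, b) ∈ F)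
    (hAB : Disjoint A B) (σ : A ≃ B) :
    ((F \ crossEdges A B) ∪ pairingEdges fun a => (σ a : V)).ncard = F.ncard := by
  have hdisj : Disjoint (F \ crossEdges A B) (pairingEdges fun a => (σ a : V)) := by
    rw [Set.disjoint_right]
    rintro e ⟨a, rfl⟩ he
    exact (hF.notMem_of_mem_diff_crossEdges hAF hBF he (Sym2.mem_mk_left _ _)).1 a.2
  rw [Set.ncard_def, Set.ncard_def, Set.encard_union_eq hdisj,
    encard_pairingEdges fun a => hAB.notMem_of_mem_right (σ a).2,
    ← hF.encard_inter_crossEdges hAF hAB, Set.encard_sdiff_add_encard_inter]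

end IsMatching

end

theorem module_matching_exchange_general {V : Type*}
    (G : SimpleGraph V) (M : Set V) (hM : IsModule G M)
    (F : Set (Sym2 V)) (hF : IsMatching G F)
    (A B : Set V)
    (hA : A = {v | v ∈ M ∧ ∃ w, w ∉ M ∧ s(v, w) ∈ F})
    (hB : B = {w | w ∉ M ∧ ∃ v ∈ A, s(v, w) ∈ F}) :
    (∀ a ∈ A, ∀ b ∈ B, G.Adj a b) ∧
    ∀ σ : ↥A ≃ ↥B,
      IsMatching G ((F \ {e | ∃ a ∈ A, ∃ b ∈ B, e = s(a, b)}) ∪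
        {e | ∃ a : ↥A, e = s((a : V), ((σ a : ↥B) : V))}) ∧
      ((F \ {e | ∃ a ∈ A, ∃ b ∈ B, e = s(a, b)}) ∪
        {e | ∃ a : ↥A, e = s((a : V), ((σ a : ↥B) : V))}).ncard = F.ncard := by
  have hAM : ∀ a ∈ A, a ∈ M := by rw [hA]; exact fun a ha => ha.1
  have hBM : ∀ b ∈ B, b ∉ M := by rw [hB]; exact fun b hb => hb.1
  have hAB : Disjoint A B := Set.disjoint_left.mpr fun v hvA hvB => hBM v hvB (hAM v hvA)
  have hBF : ∀ b ∈ B, ∃ a ∈ A, s(a, b) ∈ F := by rw [hB]; exact fun b hb => hb.2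
  have hAF : ∀ a ∈ A, ∃ b ∈ B, s(a, b) ∈ F := by
    intro a ha
    obtain ⟨-, b, hbM, hab⟩ := (Set.ext_iff.mp hA a).mp ha
    exact ⟨b, (Set.ext_iff.mp hB b).mpr ⟨hbM, a, ha, hab⟩, hab⟩
  have hadj : ∀ a ∈ A, ∀ b ∈ B, G.Adj a b := by
    intro a ha b hb
    obtain ⟨a', ha', ha'b⟩ := hBF b hb
    exact (hM a (hAM a ha) a' (hAM a' ha') b (hBM b hb)).2 (hF.1 ha'b)
  exact ⟨hadj, fun σ => ⟨hF.exchange hAF hBF hAB σ fun a => hadj a a.2 _ (σ a).2,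
    hF.ncard_exchange hAF hBF hAB σ⟩⟩

/-- Let `M` be a nonempty module of `G` and `F` a matching of `G`. Let `A ⊆ M` be the
vertices of `M` matched by `F` to vertices outside `M`, and `B` the set of `F`-partners of
the vertices of `A`. Then every vertex of `A` is adjacent to every vertex of `B`, and for
every bijection `σ : A → B`, replacing in `F` the edges between `A` and `B` by
`{ {a, σ a} : a ∈ A }` yields a matching of `G` of the same cardinality as `F`. -/
theorem module_matching_exchange {V : Type*} [Fintype V]
    (G : SimpleGraph V) (M : Set V) (hM : IsModule G M) (hne : M.Nonempty)
    (F : Set (Sym2 V)) (hF : IsMatching G F)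
    (A B : Set V)
    (hA : A = {v | v ∈ M ∧ ∃ w, w ∉ M ∧ s(v, w) ∈ F})
    (hB : B = {w | w ∉ M ∧ ∃ v ∈ A, s(v, w) ∈ F}) :
    (∀ a ∈ A, ∀ b ∈ B, G.Adj a b) ∧
    ∀ σ : ↥A ≃ ↥B,
      IsMatching G ((F \ {e | ∃ a ∈ A, ∃ b ∈ B, e = s(a, b)}) ∪
        {e | ∃ a : ↥A, e = s((a : V), ((σ a : ↥B) : V))}) ∧
      ((F \ {e | ∃ a ∈ A, ∃ b ∈ B, e = s(a, b)}) ∪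
        {e | ∃ a : ↥A, e = s((a : V), ((σ a : ↥B) : V))}).ncard = F.ncard :=
  module_matching_exchange_general G M hM F hF A B hA hB
end
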